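/- Let f be convex differentiable with L-Lipschitz gradient, g closed convex, φ = f + g with nonempty minimizer set 𝒳, γ ≥ L, and let x_{k+1} = x_k − (1/γ)G(x_k) be the proximal gradient iterates. Then one has the one-step distance estimate: d²(x_{k+1}, 𝒳) ≤ d²(x_k, 𝒳) − (2/γ)(φ(x_{k+1}) − φ*). -/

import Mathlib

/-
The proximal step `p x̄` minimises the `γ`-strongly convex model
`f x̄ + ⟪∇f x̄, z - x̄⟫ + γ/2 ‖z - x̄‖²` plus the convex `g`, so every `u` satisfies
`model (p x̄) + g (p x̄) + γ/2 ‖u - p x̄‖² ≤ model u + g u`. The descent lemma (`L ≤ γ`) bounds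
`f (p x̄)` by the model, and convexity of `f` bounds the model at `u` by `f u + γ/2 ‖u - x̄‖²`.
For `u ∈ 𝒳` this reads `‖p x̄ - u‖² + (2/γ)(φ (p x̄) - φ*) ≤ ‖x̄ - u‖²`, and taking the infimum
over `u ∈ 𝒳` gives the estimate.
-/

open RealInnerProductSpace Metric Set Filter

abbrev Euc (n : ℕ) : Type := EuclideanSpace ℝ (Fin n)

theorem EReal.eq_coe_sub_of_coe_add_eq {a b : ℝ} {z : EReal} (h : (a : EReal) + z = b) :
    z = ((b - a : ℝ) : EReal) := by
  induction z using EReal.rec with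
  | bot => simp at h
  | top => simp at h
  | coe z =>
    norm_cast at h ⊢
    linarith

theorem Metric.infDist_sq_add_le_of_forall_mem {α : Type*} [PseudoMetricSpace α] {s : Set α}
    (hs : s.Nonempty) {x y : α} {c : ℝ} (h : ∀ u ∈ s, dist y u ^ 2 + c ≤ dist x u ^ 2) :
    infDist y s ^ 2 + c ≤ infDist x s ^ 2 := by
  set a := infDist y s ^ 2 + c
  rcases le_or_gt a 0 with ha | ha
  · exact ha.trans (sq_nonneg _)
  have hle : ∀ u ∈ s, a ≤ dist x u ^ 2 := fun u hu =>
    (add_le_add_left (pow_le_pow_left₀ infDist_nonneg (infDist_le_dist_of_mem hu) 2) c).trans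
      (h u hu)
  have hsqrt : √a ≤ infDist x s := (le_infDist hs).2 fun u hu =>
    Real.sqrt_le_iff.2 ⟨dist_nonneg, hle u hu⟩
  simpa [Real.sq_sqrt ha.le] using pow_le_pow_left₀ (Real.sqrt_nonneg a) hsqrt 2

variable {E : Type*} [NormedAddCommGroup E] [InnerProductSpace ℝ E]

theorem strongConvexOn_add_inner_add_sq (c : ℝ) (v w : E) (γ : ℝ) :
    StrongConvexOn univ γ (fun z => c + ⟪v, z - w⟫ + γ / 2 * ‖z - w‖ ^ 2) := by
  have haffine : (fun z => c + ⟪v, z - w⟫ + γ / 2 * ‖z - w‖ ^ 2 - γ / 2 * ‖z‖ ^ 2)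
      = fun z => (innerₛₗ ℝ (v - γ • w)) z + (c - ⟪v, w⟫ + γ / 2 * ‖w‖ ^ 2) := by
    ext z
    simp only [innerₛₗ_apply_apply, norm_sub_sq_real, inner_sub_left, inner_sub_right,
      real_inner_smul_left, real_inner_comm z w]
    ring
  rw [strongConvexOn_iff_convex, haffine]
  exact ((innerₛₗ ℝ (v - γ • w)).convexOn convex_univ).add_const _

theorem StrongConvexOn.add_half_mul_sq_le_of_minimizer {m : E → ℝ} {γ : ℝ}
    (hm : StrongConvexOn univ γ m) {h : E → EReal}
    (hh : ∀ x y : E, ∀ a b : ℝ, 0 ≤ a → 0 ≤ b → a + b = 1 →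
      h (a • x + b • y) ≤ (a : EReal) * h x + (b : EReal) * h y)
    {xp u : E} {c d : ℝ} (hxp : h xp = c) (hu : h u = d)
    (hmin : ∀ z, (m xp : EReal) + h xp ≤ (m z : EReal) + h z) :
    m xp + c + γ / 2 * ‖u - xp‖ ^ 2 ≤ m u + d := by
  -- Minimality tested at `(1 - t) • xp + t • u`, divided by `t`, keeps the strong-convexity
  -- gain with a factor `1 - t`; then let `t → 0⁺`.
  have hsegment : ∀ t ∈ Ioo (0 : ℝ) 1,
      m xp + c + (1 - t) * (γ / 2 * ‖u - xp‖ ^ 2) ≤ m u + d := by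
    rintro t ⟨ht0, ht1⟩
    have hmw := hm.2 (mem_univ xp) (mem_univ u) (sub_nonneg.2 ht1.le) ht0.le (sub_add_cancel 1 t)
    have hhw := hh xp u (1 - t) t (sub_nonneg.2 ht1.le) ht0.le (sub_add_cancel 1 t)
    have hw := (hmin ((1 - t) • xp + t • u)).trans (add_le_add_right hhw _)
    rw [hxp, hu] at hw
    norm_cast at hw
    rw [norm_sub_rev] at hmw
    simp only [smul_eq_mul] at hmw
    refine le_of_mul_le_mul_left ?_ ht0
    nlinarith
  have hcont : Continuous fun t : ℝ => m xp + c + (1 - t) * (γ / 2 * ‖u - xp‖ ^ 2) := by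
    fun_prop
  have hlim := (hcont.tendsto 0).mono_left (nhdsWithin_le_nhds (s := Ioi 0))
  simp only [sub_zero, one_mul] at hlim
  exact le_of_tendsto hlim (eventually_of_mem (Ioo_mem_nhdsGT zero_lt_one) hsegment)

variable [CompleteSpace E] {f : E → ℝ}

theorem HasGradientAt.hasDerivAt_comp_lineMap {v x y : E} {t : ℝ}
    (hf : HasGradientAt f v (AffineMap.lineMap x y t)) :
    HasDerivAt (fun s => f (AffineMap.lineMap x y s)) ⟪v, y - x⟫ t := by
  simpa [InnerProductSpace.toDual_apply_apply, Function.comp_def] using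
    hf.hasFDerivAt.comp_hasDerivAt t AffineMap.hasDerivAt_lineMap

theorem ConvexOn.add_inner_le_of_hasGradientAt (hconv : ConvexOn ℝ univ f) {v x : E}
    (hf : HasGradientAt f v x) (y : E) : f x + ⟪v, y - x⟫ ≤ f y := by
  have hline : ConvexOn ℝ univ (fun s => f (AffineMap.lineMap x y s)) :=
    hconv.comp_affineMap (AffineMap.lineMap x y)
  have hderiv := hline.le_slope_of_hasDerivAt (mem_univ 0) (mem_univ 1) zero_lt_one
    (HasGradientAt.hasDerivAt_comp_lineMap (by simpa using hf))
  simp only [slope_def_field, AffineMap.lineMap_apply_one, AffineMap.lineMap_apply_zero, sub_zero,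
    div_one] at hderiv
  linarith

theorem le_add_inner_add_sq_of_lipschitz_gradient {f' : E → E} {L : ℝ}
    (hf : ∀ z, HasGradientAt f (f' z) z) (hLip : ∀ a b, ‖f' a - f' b‖ ≤ L * ‖a - b‖) (x y : E) :
    f y ≤ f x + ⟪f' x, y - x⟫ + L / 2 * ‖y - x‖ ^ 2 := by
  set v := y - x
  let k : ℝ → ℝ := fun t => f (AffineMap.lineMap x y t) - t * ⟪f' x, v⟫ - L / 2 * t ^ 2 * ‖v‖ ^ 2
  have hk : ∀ t, HasDerivAt k
      (⟪f' (AffineMap.lineMap x y t), v⟫ - ⟪f' x, v⟫ - L * t * ‖v‖ ^ 2) t := fun t => by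
    refine (((hf _).hasDerivAt_comp_lineMap.sub ((hasDerivAt_id t).mul_const _)).sub
      (((hasDerivAt_pow 2 t).const_mul (L / 2)).mul_const _)).congr_deriv ?_
    simp only [one_mul]
    ring
  have hk_nonpos : ∀ t ∈ interior (Icc (0 : ℝ) 1),
      ⟪f' (AffineMap.lineMap x y t), v⟫ - ⟪f' x, v⟫ - L * t * ‖v‖ ^ 2 ≤ 0 := by
    intro t ht
    rw [interior_Icc] at ht
    have hdist : ‖AffineMap.lineMap x y t - x‖ = t * ‖v‖ := by
      rw [AffineMap.lineMap_apply_module', add_sub_cancel_right, norm_smul,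
        Real.norm_of_nonneg ht.1.le]
    rw [sub_nonpos]
    calc ⟪f' (AffineMap.lineMap x y t), v⟫ - ⟪f' x, v⟫
        = ⟪f' (AffineMap.lineMap x y t) - f' x, v⟫ := (inner_sub_left _ _ _).symm
      _ ≤ ‖f' (AffineMap.lineMap x y t) - f' x‖ * ‖v‖ := real_inner_le_norm _ _
      _ ≤ L * (t * ‖v‖) * ‖v‖ := by
        rw [← hdist]; exact mul_le_mul_of_nonneg_right (hLip _ _) (norm_nonneg v)
      _ = L * t * ‖v‖ ^ 2 := by ring
  have hanti : AntitoneOn k (Icc 0 1) :=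
    antitoneOn_of_hasDerivWithinAt_nonpos (convex_Icc 0 1)
      (HasDerivAt.continuousOn fun t _ => hk t) (fun t _ => (hk t).hasDerivWithinAt) hk_nonpos
  have h01 := hanti (left_mem_Icc.2 zero_le_one) (right_mem_Icc.2 zero_le_one) zero_le_one
  simp only [k, AffineMap.lineMap_apply_zero, AffineMap.lineMap_apply_one] at h01
  linarith

theorem dist_sq_add_le_of_proxGrad_step {f' : E → E} {g : E → EReal} {L γ : ℝ}
    (hγ : 0 < γ) (hLγ : L ≤ γ) (hconv : ConvexOn ℝ univ f) (hgrad : ∀ z, HasGradientAt f (f' z) z)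
    (hLip : ∀ a b, ‖f' a - f' b‖ ≤ L * ‖a - b‖)
    (hgconv : ∀ x y : E, ∀ a b : ℝ, 0 ≤ a → 0 ≤ b → a + b = 1 →
      g (a • x + b • y) ≤ (a : EReal) * g x + (b : EReal) * g y)
    {xb xp u : E} {c d : ℝ} (hxp : g xp = c) (hu : g u = d)
    (hmin : ∀ z, ((f xb + ⟪f' xb, xp - xb⟫ + γ / 2 * ‖xp - xb‖ ^ 2 : ℝ) : EReal) + g xp
        ≤ ((f xb + ⟪f' xb, z - xb⟫ + γ / 2 * ‖z - xb‖ ^ 2 : ℝ) : EReal) + g z) :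
    dist xp u ^ 2 + 2 / γ * (f xp + c - (f u + d)) ≤ dist xb u ^ 2 := by
  have hmodel := strongConvexOn_add_inner_add_sq (f xb) (f' xb) xb γ
  have hgrowth := hmodel.add_half_mul_sq_le_of_minimizer hgconv hxp hu hmin
  have hdescent := le_add_inner_add_sq_of_lipschitz_gradient hgrad hLip xb xp
  have hlower := hconv.add_inner_le_of_hasGradientAt (hgrad xb) u
  have hLγ' : L / 2 * ‖xp - xb‖ ^ 2 ≤ γ / 2 * ‖xp - xb‖ ^ 2 := by gcongr
  rw [dist_comm xp, dist_comm xb, dist_eq_norm, dist_eq_norm]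
  refine le_of_mul_le_mul_left ?_ hγ
  field_simp
  linarith

theorem stmt_16_general {n : ℕ} (L γ : ℝ) (hL : 0 < L) (hγ : γ ≥ L)
    (f : Euc n → ℝ) (f' : Euc n → Euc n) (g : Euc n → EReal)
    (hconv : ConvexOn ℝ Set.univ f)
    (hgrad : ∀ x, HasGradientAt f (f' x) x)
    (hLip : ∀ x y, ‖f' x - f' y‖ ≤ L * ‖x - y‖)
    (hgconv : ∀ x y : Euc n, ∀ a b : ℝ, 0 ≤ a → 0 ≤ b → a + b = 1 →
      g (a • x + b • y) ≤ (a : EReal) * g x + (b : EReal) * g y)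
    (p : Euc n → Euc n)
    (hp : ∀ xb x, ((f xb + ⟪f' xb, p xb - xb⟫ + γ / 2 * ‖p xb - xb‖ ^ 2 : ℝ) : EReal) + g (p xb)
        ≤ ((f xb + ⟪f' xb, x - xb⟫ + γ / 2 * ‖x - xb‖ ^ 2 : ℝ) : EReal) + g x)
    (X : Set (Euc n))
    (hX : X = {x | ∀ y, (f x : EReal) + g x ≤ (f y : EReal) + g y})
    (xs : Euc n) (hxs : xs ∈ X)
    (fstar : ℝ) (hstar : (f xs : EReal) + g xs = (fstar : ℝ))
    (x : ℕ → Euc n)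
    (hiter : ∀ k, x (k + 1) = x k - (1 / γ) • (γ • (x k - p (x k)))) :
    ∀ k, ((Metric.infDist (x (k + 1)) X ^ 2 : ℝ) : EReal)
        + ((2 / γ : ℝ) : EReal) * (((f (x (k + 1)) : EReal) + g (x (k + 1))) - (fstar : ℝ))
      ≤ ((Metric.infDist (x k) X ^ 2 : ℝ) : EReal) := by
  intro k
  have hγ0 : 0 < γ := hL.trans_le hγ
  have hstep : x (k + 1) = p (x k) := by
    rw [hiter k, smul_smul, one_div, inv_mul_cancel₀ hγ0.ne', one_smul, sub_sub_cancel]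
  have hargmin : ∀ u ∈ X, ∀ y, (f u : EReal) + g u ≤ f y + g y := fun u hu => by
    rwa [hX] at hu
  have hfstar_le : ∀ y, (fstar : EReal) ≤ f y + g y := fun y => hstar.ge.trans (hargmin xs hxs y)
  have hgX : ∀ u ∈ X, g u = ((fstar - f u : ℝ) : EReal) := fun u hu =>
    EReal.eq_coe_sub_of_coe_add_eq (((hargmin u hu xs).trans hstar.le).antisymm (hfstar_le u))
  obtain ⟨c, hc⟩ : ∃ c : ℝ, g (p (x k)) = c := by
    refine ⟨_, (EReal.coe_toReal (fun htop => ?_) (fun hbot => ?_)).symm⟩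
    · have h := hp (x k) xs
      rw [htop, hgX xs hxs, EReal.coe_add_top, ← EReal.coe_add, top_le_iff] at h
      exact EReal.coe_ne_top _ h
    · simpa [hbot] using hfstar_le (p (x k))
  have hkey : ∀ u ∈ X,
      dist (p (x k)) u ^ 2 + 2 / γ * (f (p (x k)) + c - fstar) ≤ dist (x k) u ^ 2 := fun u hu => by
    simpa using
      dist_sq_add_le_of_proxGrad_step hγ0 hγ hconv hgrad hLip hgconv hc (hgX u hu) (hp (x k))
  rw [hstep, hc]
  exact_mod_cast infDist_sq_add_le_of_forall_mem ⟨xs, hxs⟩ hkey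

theorem stmt_16 {n : ℕ} (L γ : ℝ) (hL : 0 < L) (hγ : γ ≥ L)
    (f : Euc n → ℝ) (f' : Euc n → Euc n) (g : Euc n → EReal)
    (hconv : ConvexOn ℝ Set.univ f)
    (hgrad : ∀ x, HasGradientAt f (f' x) x)
    (hLip : ∀ x y, ‖f' x - f' y‖ ≤ L * ‖x - y‖)
    (hgbot : ∀ x, g x ≠ ⊥) (hgtop : ∃ x, g x ≠ ⊤)
    (hglsc : LowerSemicontinuous g)
    (hgconv : ∀ x y : Euc n, ∀ a b : ℝ, 0 ≤ a → 0 ≤ b → a + b = 1 →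
      g (a • x + b • y) ≤ (a : EReal) * g x + (b : EReal) * g y)
    (p : Euc n → Euc n)
    (hp : ∀ xb x, ((f xb + ⟪f' xb, p xb - xb⟫ + γ / 2 * ‖p xb - xb‖ ^ 2 : ℝ) : EReal) + g (p xb)
        ≤ ((f xb + ⟪f' xb, x - xb⟫ + γ / 2 * ‖x - xb‖ ^ 2 : ℝ) : EReal) + g x)
    (X : Set (Euc n))
    (hX : X = {x | ∀ y, (f x : EReal) + g x ≤ (f y : EReal) + g y})
    (hne : X.Nonempty)
    (xs : Euc n) (hxs : xs ∈ X)
    (fstar : ℝ) (hstar : (f xs : EReal) + g xs = (fstar : ℝ))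
    (x : ℕ → Euc n)
    (hiter : ∀ k, x (k + 1) = x k - (1 / γ) • (γ • (x k - p (x k)))) :
    ∀ k, ((Metric.infDist (x (k + 1)) X ^ 2 : ℝ) : EReal)
        + ((2 / γ : ℝ) : EReal) * (((f (x (k + 1)) : EReal) + g (x (k + 1))) - (fstar : ℝ))
      ≤ ((Metric.infDist (x k) X ^ 2 : ℝ) : EReal) :=
  stmt_16_general L γ hL hγ f f' g hconv hgrad hLip hgconv p hp X hX xs hxs fstar hstar x hiter
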